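/- arXiv:2409.18731 — 4 statements merged into one kernel-verified Lean document; each statement's English description precedes it below -/
import Mathlib

section
/- Let F be the linear map on matrices defined by F(X) = Unv((I_{K1} ⊗ L_{K2 J1} ⊗ I_{J2}) Vec(X^T), J1 J2, K1 K2) for X ∈ ℝ^{J1 K1 × J2 K2}, where Unv(v, m, n) reshapes a vector of length mn into an m×n matrix column-wise. Then F is a linear bijection from ℝ^{J1 K1 × J2 K2} to ℝ^{J1 J2 × K1 K2}, and for all M1 ∈ ℝ^{J1×K1}, M2 ∈ ℝ^{J2×K2} it satisfies F(Vec(M1) Vec(M2)^T) = M1 ⊗ M2. -/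
/-!
Following an index through the two identity factors and the commutation matrix shows that `F`
only permutes entries: `F(X)_{(j1,j2),(k1,k2)} = X_{(k1,j1),(k2,j2)}`. So `F` is linear, the
reverse permutation inverts it, and on `Vec(M1) Vec(M2)ᵀ` it produces the entries
`M1_{j1k1} M2_{j2k2}` of `M1 ⊗ M2`.
-/

open Matrix Kronecker

noncomputable section

/-- Column-stacking vectorization: `vec A (j, i) = A i j`. -/
def vec {m n : Type*} (A : Matrix m n ℝ) : n × m → ℝ := fun p => A p.2 p.1

/-- The commutation matrix `L_{α,β}` satisfying `(commMat α β).mulVec (vec A) = vec Aᵀ`. -/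
def commMat (α β : Type*) [DecidableEq α] [DecidableEq β] : Matrix (α × β) (β × α) ℝ :=
  fun p q => if p.1 = q.2 ∧ p.2 = q.1 then 1 else 0

/-- The rearrangement map `F(X) = Unv((I_{K1} ⊗ L_{K2 J1} ⊗ I_{J2}) Vec(Xᵀ), J1 J2, K1 K2)`.
Here `ℝ^{J1 K1 × J2 K2}` is represented (column-major) as `Matrix (K1 × J1) (K2 × J2) ℝ`,
`ℝ^{J1 J2 × K1 K2}` as `Matrix (J1 × J2) (K1 × K2) ℝ`, and the `Unv` reshaping (also
column-major) reads the output entry `(j1,j2),(k1,k2)` off position `((k1,(k2,j1)),j2)` of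
the vector `(I_{K1} ⊗ L_{K2 J1} ⊗ I_{J2}) Vec(Xᵀ)`. -/
def Fmap {J1 K1 J2 K2 : Type*}
    [Fintype J1] [Fintype K1] [Fintype J2] [Fintype K2]
    [DecidableEq J1] [DecidableEq K1] [DecidableEq J2] [DecidableEq K2]
    (X : Matrix (K1 × J1) (K2 × J2) ℝ) : Matrix (J1 × J2) (K1 × K2) ℝ :=
  Matrix.of fun jp kp =>
    ((((1 : Matrix K1 K1 ℝ) ⊗ₖ commMat K2 J1) ⊗ₖ (1 : Matrix J2 J2 ℝ)).mulVec
      (fun q => _root_.vec Xᵀ ((q.1.1, q.1.2.1), (q.1.2.2, q.2))))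
      ((kp.1, (kp.2, jp.1)), jp.2)

section KroneckerMulVec

variable {R l m n p : Type*} [NonAssocSemiring R] [Fintype m] [Fintype n]

theorem kronecker_one_mulVec_apply [DecidableEq n] (A : Matrix l m R) (v : m × n → R)
    (i : l) (j : n) : ((A ⊗ₖ (1 : Matrix n n R)) *ᵥ v) (i, j) = (A *ᵥ fun q => v (q, j)) i := by
  simp only [mulVec, dotProduct, kroneckerMap_apply, Fintype.sum_prod_type, one_apply,
    mul_ite, mul_one, mul_zero, ite_mul, zero_mul, Finset.sum_ite_eq, Finset.mem_univ, if_true]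

theorem one_kronecker_mulVec_apply [DecidableEq m] (B : Matrix p n R) (v : m × n → R)
    (i : m) (j : p) : (((1 : Matrix m m R) ⊗ₖ B) *ᵥ v) (i, j) = (B *ᵥ fun q => v (i, q)) j := by
  simp only [mulVec, dotProduct, kroneckerMap_apply, one_apply, ite_mul, one_mul, zero_mul,
    Fintype.sum_prod_type, Finset.sum_ite_irrel, Finset.sum_const_zero, Finset.sum_ite_eq,
    Finset.mem_univ, if_true]

end KroneckerMulVec

theorem commMat_mulVec_apply {α β : Type*} [Fintype α] [Fintype β] [DecidableEq α]
    [DecidableEq β] (v : β × α → ℝ) (a : α) (b : β) : (commMat α β *ᵥ v) (a, b) = v (b, a) := by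
  simp only [mulVec, dotProduct, commMat, ite_mul, one_mul, zero_mul, Fintype.sum_prod_type,
    ite_and, Finset.sum_ite_eq, Finset.mem_univ, if_true]

section Fmap

variable {J1 K1 J2 K2 : Type*} [Fintype J1] [Fintype K1] [Fintype J2] [Fintype K2]
  [DecidableEq J1] [DecidableEq K1] [DecidableEq J2] [DecidableEq K2]

theorem Fmap_apply (X : Matrix (K1 × J1) (K2 × J2) ℝ) (j1 : J1) (j2 : J2) (k1 : K1) (k2 : K2) :
    Fmap X (j1, j2) (k1, k2) = X (k1, j1) (k2, j2) := by
  rw [Fmap, of_apply, kronecker_one_mulVec_apply, one_kronecker_mulVec_apply,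
    commMat_mulVec_apply]
  rfl

def FmapInv (Y : Matrix (J1 × J2) (K1 × K2) ℝ) : Matrix (K1 × J1) (K2 × J2) ℝ :=
  of fun p q => Y (p.2, q.2) (p.1, q.1)

theorem FmapInv_Fmap : Function.LeftInverse (FmapInv (J1 := J1) (K1 := K1) (J2 := J2) (K2 := K2))
    Fmap := by
  intro X
  ext ⟨k1, j1⟩ ⟨k2, j2⟩
  exact Fmap_apply X j1 j2 k1 k2

theorem Fmap_FmapInv : Function.RightInverse (FmapInv (J1 := J1) (K1 := K1) (J2 := J2) (K2 := K2))
    Fmap := by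
  intro Y
  ext ⟨j1, j2⟩ ⟨k1, k2⟩
  exact Fmap_apply _ j1 j2 k1 k2

theorem Fmap_isLinearMap : IsLinearMap ℝ (Fmap (J1 := J1) (K1 := K1) (J2 := J2) (K2 := K2)) where
  map_add X Y := by ext ⟨j1, j2⟩ ⟨k1, k2⟩; simp only [Fmap_apply, Matrix.add_apply]
  map_smul c X := by ext ⟨j1, j2⟩ ⟨k1, k2⟩; simp only [Fmap_apply, Matrix.smul_apply]

theorem Fmap_bijective : Function.Bijective (Fmap (J1 := J1) (K1 := K1) (J2 := J2) (K2 := K2)) :=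
  Function.bijective_iff_has_inverse.mpr ⟨FmapInv, FmapInv_Fmap, Fmap_FmapInv⟩

theorem Fmap_vec_mul_vec (M1 : Matrix J1 K1 ℝ) (M2 : Matrix J2 K2 ℝ) :
    Fmap (of fun p q => _root_.vec M1 p * _root_.vec M2 q) = M1 ⊗ₖ M2 := by
  ext ⟨j1, j2⟩ ⟨k1, k2⟩
  rw [Fmap_apply]
  rfl

end Fmap

/-- `F` is a linear bijection from `ℝ^{J1 K1 × J2 K2}` to `ℝ^{J1 J2 × K1 K2}`
and satisfies `F(Vec(M1) Vec(M2)ᵀ) = M1 ⊗ M2` for all `M1 ∈ ℝ^{J1×K1}`, `M2 ∈ ℝ^{J2×K2}`. -/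
theorem Fmap_linear_bijective_kron {J1 K1 J2 K2 : Type*}
    [Fintype J1] [Fintype K1] [Fintype J2] [Fintype K2]
    [DecidableEq J1] [DecidableEq K1] [DecidableEq J2] [DecidableEq K2] :
    IsLinearMap ℝ (Fmap (J1 := J1) (K1 := K1) (J2 := J2) (K2 := K2)) ∧
    Function.Bijective (Fmap (J1 := J1) (K1 := K1) (J2 := J2) (K2 := K2)) ∧
    ∀ (M1 : Matrix J1 K1 ℝ) (M2 : Matrix J2 K2 ℝ),
      Fmap (Matrix.of fun p q => _root_.vec M1 p * _root_.vec M2 q) = M1 ⊗ₖ M2 :=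
  ⟨Fmap_isLinearMap, Fmap_bijective, Fmap_vec_mul_vec⟩
end
end

section
/- Let Φ ∈ ℝ^{φ×φ} have rank R with rank decomposition Φ = Σ_{r=1}^R u_r v_r^T. Then for any tensor Z (viewed as an M1×M2 array of vectors), periodic 2D convolution with Φ decomposes as Z ∗ Φ = Σ_{r=1}^R Z ×_1 T^{u_r} ×_2 T^{v_r}, where T^{u_r} = Σ_{l=1}^φ u_r[l] J_{M1}^{M1 - m' + l} and T^{v_r} = Σ_{s=1}^φ v_r[s] J_{M2}^{M2 - n' + s} are circulant matrices built from the cyclic shift matrix J_M and fixed shift parameters m', n'. -/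
open Matrix

noncomputable section

/-- The basic circulant (cyclic shift) matrix `J_M`, with `J_M[i, i+1] = 1`. -/
def cyc (M : ℕ) [NeZero M] : Matrix (ZMod M) (ZMod M) ℝ :=
  Matrix.of fun i j => if j = i + 1 then 1 else 0

/-- Mode-1 product of a 3-tensor with a matrix. -/
def mode1 {α α' β γ : Type*} [Fintype α] (A : Matrix α' α ℝ) (Z : α → β → γ → ℝ) :
    α' → β → γ → ℝ := fun a b c => ∑ x, A a x * Z x b c

/-- Mode-2 product of a 3-tensor with a matrix. -/
def mode2 {α β β' γ : Type*} [Fintype β] (B : Matrix β' β ℝ) (Z : α → β → γ → ℝ) :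
    α → β' → γ → ℝ := fun a b c => ∑ x, B b x * Z a x c

/-- Periodic 2D convolution (band-by-band) of `Z ∈ ℝ^{M1×M2×S}` with kernel
`Φ ∈ ℝ^{φ×φ}`, with shift parameters `m', n'`:
`(Z ∗ Φ)[m,n,:] = Σ_{l,t} Φ[l,t] Z[m−m'+l, n−n'+t, :]` (indices mod `M1`, `M2`). -/
def pconv {M1 M2 : ℕ} [NeZero M1] [NeZero M2] {γ : Type*} (φ : ℕ) (m' n' : ℕ)
    (Φ : Matrix (Fin φ) (Fin φ) ℝ) (Z : ZMod M1 → ZMod M2 → γ → ℝ) :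
    ZMod M1 → ZMod M2 → γ → ℝ :=
  fun m n s => ∑ l : Fin φ, ∑ t : Fin φ,
    Φ l t * Z (m - (m' : ZMod M1) + ((l : ℕ) : ZMod M1))
              (n - (n' : ZMod M2) + ((t : ℕ) : ZMod M2)) s

lemma cyc_pow_apply (M : ℕ) [NeZero M] (k : ℕ) (i j : ZMod M) :
    ((cyc M) ^ k) i j = if j = i + (k : ℕ) then 1 else 0 := by
  induction k generalizing i j with
  | zero => simp [Matrix.one_apply, eq_comm]
  | succ k ih =>
    rw [pow_succ, Matrix.mul_apply]
    simp only [ih]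
    simp only [cyc, Matrix.of_apply, ite_mul, one_mul, zero_mul]
    rw [Finset.sum_ite_eq' Finset.univ (i + (k : ZMod M))]
    push_cast
    simp [add_assoc]

lemma sumCollapse_aux {M : ℕ} [NeZero M] {φ : ℕ} (u : Fin φ → ℝ) (c : Fin φ → ZMod M)
    (f : ZMod M → ℝ) (a : ZMod M) :
    ∑ x, (∑ l, u l * if x = a + c l then 1 else 0) * f x = ∑ l, u l * f (a + c l) := by
  simp only [Finset.sum_mul]
  rw [Finset.sum_comm]
  refine Finset.sum_congr rfl fun l _ => ?_
  simp only [mul_ite, ite_mul, mul_one, mul_zero, zero_mul]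
  rw [Finset.sum_ite_eq' Finset.univ (a + c l)]
  simp

lemma castShift_aux {M : ℕ} [NeZero M] (m' k : ℕ) (hm' : m' ≤ M) (a : ZMod M) :
    a + ((M - m' + k : ℕ) : ZMod M) = a - (m' : ZMod M) + (k : ZMod M) := by
  push_cast [Nat.cast_sub hm']
  simp [ZMod.natCast_self, sub_eq_add_neg]
  ring

/-- if `Φ` has rank `R` with rank decomposition `Φ = Σ_r u_r v_rᵀ`, then
periodic 2D convolution with `Φ` decomposes as
`Z ∗ Φ = Σ_r Z ×₁ T^{u_r} ×₂ T^{v_r}`, where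
`T^{u_r} = Σ_l u_r[l] J_{M1}^{M1−m'+l}` and `T^{v_r} = Σ_t v_r[t] J_{M2}^{M2−n'+t}`. -/
theorem pconv_decomposition {M1 M2 : ℕ} [NeZero M1] [NeZero M2] {γ : Type*}
    (φ R m' n' : ℕ) (hm' : m' ≤ M1) (hn' : n' ≤ M2)
    (Φ : Matrix (Fin φ) (Fin φ) ℝ)
    (hR : Φ.rank = R)
    (u v : Fin R → Fin φ → ℝ)
    (hΦ : ∀ l t, Φ l t = ∑ r : Fin R, u r l * v r t)
    (Z : ZMod M1 → ZMod M2 → γ → ℝ) :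
    pconv φ m' n' Φ Z = fun m n s => ∑ r : Fin R,
      mode2 (∑ t : Fin φ, v r t • (cyc M2) ^ (M2 - n' + (t : ℕ)))
        (mode1 (∑ l : Fin φ, u r l • (cyc M1) ^ (M1 - m' + (l : ℕ))) Z) m n s := by
  funext m n s
  simp only [pconv, mode1, mode2, Matrix.sum_apply, Matrix.smul_apply, cyc_pow_apply,
    smul_eq_mul, hΦ]
  simp only [sumCollapse_aux]
  simp only [castShift_aux _ _ hm', castShift_aux _ _ hn']
  simp only [Finset.sum_mul, Finset.mul_sum]
  rw [Finset.sum_comm]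
  conv_lhs => rw [Finset.sum_congr rfl fun t _ => Finset.sum_comm ..]
  rw [Finset.sum_comm]
  exact Finset.sum_congr rfl fun r _ => Finset.sum_congr rfl fun t _ =>
    Finset.sum_congr rfl fun l _ => by ring
end
end

section
/- Let Π be an invertible matrix that maps every block-diagonal matrix diag(C, C, …, C) (R diagonal blocks, each equal to an arbitrary J×K matrix C) to another block-diagonal matrix with R blocks of size J×K, via a block-wise permutation of the R row-blocks: Π diag(Ĉ^(1),…,Ĉ^(R)) = diag(C,…,C) where Π permutes the J-row blocks. If this holds for all C ranging over a set of matrices whose generic member has no zero rows, then Π is the identity permutation, i.e. Π = I_{JR}. -/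
open Matrix

section

variable {m n o α : Type*}

theorem eq_toMatrix_prodCongr_of_apply_eq_ite [DecidableEq m] [DecidableEq o] [Zero α] [One α]
    (σ : Equiv.Perm o) {P : Matrix (m × o) (m × o) α}
    (hP : ∀ p q, P p q = if q.1 = p.1 ∧ q.2 = σ p.2 then 1 else 0) :
    P = ((Equiv.refl m).prodCongr σ).toPEquiv.toMatrix := by
  ext p q
  simp [hP, PEquiv.toMatrix_apply, Prod.ext_iff, eq_comm]

/-- Entry `((i, r), (k, r))` of the left side lies in block `(f r, r)` of `blockDiagonal Ch`,
so it vanishes unless `f r = r`. -/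
theorem apply_eq_self_of_blockDiagonal_submatrix_eq_const [DecidableEq o] [Zero α]
    (f : o → o) {Ch : o → Matrix m n α} {C : Matrix m n α}
    (h : (blockDiagonal Ch).submatrix (Prod.map id f) id = blockDiagonal fun _ => C)
    {i : m} {k : n} (hC : C i k ≠ 0) (r : o) : f r = r := by
  by_contra hfr
  have hik := congr_fun (congr_fun h (i, r)) (k, r)
  simp only [submatrix_apply, Prod.map_apply, id_eq, blockDiagonal_apply, hfr, ↓reduceIte] at hik
  exact hC hik.symm

end

/-- let `Π` be the block permutation matrix associated with a permutation
`σ` of the `R` blocks (each block consisting of `J` rows).  If for every `C` with no zero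
rows there are blocks `Ĉ^(1),…,Ĉ^(R)` with `Π · diag(Ĉ^(1),…,Ĉ^(R)) = diag(C,…,C)`,
then `Π = I_{JR}`. -/
theorem block_permutation_is_identity {R J K : ℕ} (hK : 0 < K)
    (σ : Equiv.Perm (Fin R))
    (P : Matrix (Fin J × Fin R) (Fin J × Fin R) ℝ)
    (hP : ∀ p q, P p q = if q.1 = p.1 ∧ q.2 = σ p.2 then 1 else 0)
    (h : ∀ C : Matrix (Fin J) (Fin K) ℝ, (∀ i, ∃ k, C i k ≠ 0) →
      ∃ Ch : Fin R → Matrix (Fin J) (Fin K) ℝ,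
        P * Matrix.blockDiagonal Ch = Matrix.blockDiagonal (fun _ => C)) :
    P = 1 := by
  obtain ⟨Ch, hCh⟩ := h (fun _ _ => 1) fun _ => ⟨⟨0, hK⟩, one_ne_zero⟩
  rw [eq_toMatrix_prodCongr_of_apply_eq_ite σ hP, PEquiv.toMatrix_toPEquiv_mul] at hCh
  ext ⟨j, r⟩ q
  have hσr : σ r = r :=
    apply_eq_self_of_blockDiagonal_submatrix_eq_const σ hCh (i := j) (k := ⟨0, hK⟩) one_ne_zero r
  rw [hP, one_apply, hσr]
  simp [Prod.ext_iff, eq_comm, and_comm]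
end

section
/- Let H be a 3-tensor, Q_1, Q_2, Q_3 matrices of compatible sizes, K a tensor of the same size as the variable S, and τ > 0. The strongly convex problem min_S ‖H − S ×_1 Q_1 ×_2 Q_2 ×_3 Q_3‖_F² + τ‖S − K‖_F² has the unique solution S = T'' ×_1 V_1 ×_2 V_2 ×_3 V_3, where Q_n^T Q_n = V_n Σ_n V_n^T are eigendecompositions, T = H ×_1 Q_1^T ×_2 Q_2^T ×_3 Q_3^T + τ K, T' = T ×_1 V_1^T ×_2 V_2^T ×_3 V_3^T, and Vec(T'') = (Σ_3 ⊗ Σ_2 ⊗ Σ_1 + τ I)^{-1} Vec(T'). -/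
open Matrix

noncomputable section

/-- Mode-3 product of a 3-tensor with a matrix. -/
def mode3 {α β γ γ' : Type*} [Fintype γ] (Cm : Matrix γ' γ ℝ) (Z : α → β → γ → ℝ) :
    α → β → γ' → ℝ := fun a b c => ∑ x, Cm c x * Z a b x

/-- Squared Frobenius norm of a 3-tensor. -/
def frobSq {α β γ : Type*} [Fintype α] [Fintype β] [Fintype γ] (T : α → β → γ → ℝ) : ℝ :=
  ∑ a, ∑ b, ∑ c, (T a b c) ^ 2

namespace TikAux
set_option linter.unusedSectionVars false


variable {α β γ α' β' γ' α'' β'' γ'' : Type*} [Fintype α] [Fintype β] [Fintype γ]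
  [Fintype α'] [Fintype β'] [Fintype γ'] [Fintype α''] [Fintype β''] [Fintype γ'']

/-- Inner product of 3-tensors. -/
def ip (X Y : α → β → γ → ℝ) : ℝ := ∑ a, ∑ b, ∑ c, X a b c * Y a b c

lemma frobSq_eq_ip (X : α → β → γ → ℝ) : frobSq X = ip X X := by
  simp [frobSq, ip, sq]

lemma ip_nonneg (X : α → β → γ → ℝ) : 0 ≤ ip X X := by
  refine Finset.sum_nonneg fun a _ => Finset.sum_nonneg fun b _ =>
    Finset.sum_nonneg fun c _ => mul_self_nonneg _

lemma ip_self_eq_zero {X : α → β → γ → ℝ} (h : ip X X = 0) : ∀ a b c, X a b c = 0 := by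
  intro a b c
  have h1 := (Finset.sum_eq_zero_iff_of_nonneg (fun a _ => Finset.sum_nonneg fun b _ =>
    Finset.sum_nonneg fun c _ => mul_self_nonneg (X a b c))).1 h a (Finset.mem_univ a)
  have h2 := (Finset.sum_eq_zero_iff_of_nonneg (fun b _ =>
    Finset.sum_nonneg fun c _ => mul_self_nonneg (X a b c))).1 h1 b (Finset.mem_univ b)
  have h3 := (Finset.sum_eq_zero_iff_of_nonneg (fun c _ =>
    mul_self_nonneg (X a b c))).1 h2 c (Finset.mem_univ c)
  exact mul_self_eq_zero.1 h3

lemma ip_comm (X Y : α → β → γ → ℝ) : ip X Y = ip Y X := by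
  simp [ip, mul_comm]

lemma ip_sub_sub (X Y Z W : α → β → γ → ℝ) :
    ip (fun a b c => X a b c - Y a b c) (fun a b c => Z a b c - W a b c) =
      ip X Z - ip X W - ip Y Z + ip Y W := by
  simp only [ip, sub_mul, mul_sub, Finset.sum_sub_distrib]
  ring

lemma ip_add_right (X Y Z : α → β → γ → ℝ) :
    ip X (fun a b c => Y a b c + Z a b c) = ip X Y + ip X Z := by
  simp only [ip, mul_add, Finset.sum_add_distrib]

lemma ip_sub_left (X Y Z : α → β → γ → ℝ) :
    ip (fun a b c => X a b c - Y a b c) Z = ip X Z - ip Y Z := by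
  simp only [ip, sub_mul, Finset.sum_sub_distrib]

lemma ip_smul_right (t : ℝ) (X Y : α → β → γ → ℝ) :
    ip X (fun a b c => t * Y a b c) = t * ip X Y := by
  simp only [ip, Finset.mul_sum]
  exact Finset.sum_congr rfl fun a _ => Finset.sum_congr rfl fun b _ =>
    Finset.sum_congr rfl fun c _ => by ring

lemma sum3_rot {ι₁ ι₂ ι₃ : Type*} [Fintype ι₁] [Fintype ι₂] [Fintype ι₃]
    (g : ι₁ → ι₂ → ι₃ → ℝ) :
    ∑ b, ∑ c, ∑ x, g b c x = ∑ x, ∑ b, ∑ c, g b c x := by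
  calc ∑ b, ∑ c, ∑ x, g b c x
      = ∑ b, ∑ x, ∑ c, g b c x := Finset.sum_congr rfl fun b _ => Finset.sum_comm
    _ = ∑ x, ∑ b, ∑ c, g b c x := Finset.sum_comm

lemma ip_mode1 (Q : Matrix α' α ℝ) (Z : α → β → γ → ℝ) (W : α' → β → γ → ℝ) :
    ip (mode1 Q Z) W = ip Z (mode1 Qᵀ W) := by
  simp only [ip, mode1, transpose_apply, Finset.sum_mul, Finset.mul_sum]
  calc ∑ a, ∑ b, ∑ c, ∑ x, Q a x * Z x b c * W a b c
      = ∑ a, ∑ x, ∑ b, ∑ c, Q a x * Z x b c * W a b c :=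
        Finset.sum_congr rfl fun a _ => sum3_rot _
    _ = ∑ x, ∑ a, ∑ b, ∑ c, Q a x * Z x b c * W a b c := Finset.sum_comm
    _ = ∑ x, ∑ b, ∑ c, ∑ a, Z x b c * (Q a x * W a b c) := by
        refine Finset.sum_congr rfl fun x _ => ?_
        calc ∑ a, ∑ b, ∑ c, Q a x * Z x b c * W a b c
            = ∑ a, ∑ b, ∑ c, Z x b c * (Q a x * W a b c) :=
              Finset.sum_congr rfl fun a _ => Finset.sum_congr rfl fun b _ =>
                Finset.sum_congr rfl fun c _ => by ring
          _ = ∑ b, ∑ c, ∑ a, Z x b c * (Q a x * W a b c) := (sum3_rot _).symm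

lemma ip_mode2 (Q : Matrix β' β ℝ) (Z : α → β → γ → ℝ) (W : α → β' → γ → ℝ) :
    ip (mode2 Q Z) W = ip Z (mode2 Qᵀ W) := by
  simp only [ip, mode2, transpose_apply, Finset.sum_mul, Finset.mul_sum]
  refine Finset.sum_congr rfl fun a _ => ?_
  calc ∑ b, ∑ c, ∑ x, Q b x * Z a x c * W a b c
      = ∑ x, ∑ b, ∑ c, Q b x * Z a x c * W a b c := sum3_rot _
    _ = ∑ x, ∑ c, ∑ b, Z a x c * (Q b x * W a b c) := by
        refine Finset.sum_congr rfl fun x _ => ?_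
        rw [Finset.sum_comm]
        exact Finset.sum_congr rfl fun c _ => Finset.sum_congr rfl fun b _ => by ring

lemma ip_mode3 (Q : Matrix γ' γ ℝ) (Z : α → β → γ → ℝ) (W : α → β → γ' → ℝ) :
    ip (mode3 Q Z) W = ip Z (mode3 Qᵀ W) := by
  simp only [ip, mode3, transpose_apply, Finset.sum_mul, Finset.mul_sum]
  refine Finset.sum_congr rfl fun a _ => Finset.sum_congr rfl fun b _ => ?_
  rw [Finset.sum_comm]
  exact Finset.sum_congr rfl fun x _ => Finset.sum_congr rfl fun c _ => by ring

lemma mode1_mode1 (M : Matrix α'' α' ℝ) (N : Matrix α' α ℝ) (Z : α → β → γ → ℝ) :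
    mode1 M (mode1 N Z) = mode1 (M * N) Z := by
  funext a b c
  simp only [mode1, mul_apply, Finset.mul_sum, Finset.sum_mul]
  rw [Finset.sum_comm]
  exact Finset.sum_congr rfl fun y _ => Finset.sum_congr rfl fun x _ => by ring

lemma mode2_mode2 (M : Matrix β'' β' ℝ) (N : Matrix β' β ℝ) (Z : α → β → γ → ℝ) :
    mode2 M (mode2 N Z) = mode2 (M * N) Z := by
  funext a b c
  simp only [mode2, mul_apply, Finset.mul_sum, Finset.sum_mul]
  rw [Finset.sum_comm]
  exact Finset.sum_congr rfl fun y _ => Finset.sum_congr rfl fun x _ => by ring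

lemma mode3_mode3 (M : Matrix γ'' γ' ℝ) (N : Matrix γ' γ ℝ) (Z : α → β → γ → ℝ) :
    mode3 M (mode3 N Z) = mode3 (M * N) Z := by
  funext a b c
  simp only [mode3, mul_apply, Finset.mul_sum, Finset.sum_mul]
  rw [Finset.sum_comm]
  exact Finset.sum_congr rfl fun y _ => Finset.sum_congr rfl fun x _ => by ring

lemma mode1_mode2 (M : Matrix α' α ℝ) (N : Matrix β' β ℝ) (Z : α → β → γ → ℝ) :
    mode1 M (mode2 N Z) = mode2 N (mode1 M Z) := by
  funext a b c
  simp only [mode1, mode2, Finset.mul_sum]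
  rw [Finset.sum_comm]
  exact Finset.sum_congr rfl fun y _ => Finset.sum_congr rfl fun x _ => by ring

lemma mode1_mode3 (M : Matrix α' α ℝ) (N : Matrix γ' γ ℝ) (Z : α → β → γ → ℝ) :
    mode1 M (mode3 N Z) = mode3 N (mode1 M Z) := by
  funext a b c
  simp only [mode1, mode3, Finset.mul_sum]
  rw [Finset.sum_comm]
  exact Finset.sum_congr rfl fun y _ => Finset.sum_congr rfl fun x _ => by ring

lemma mode2_mode3 (M : Matrix β' β ℝ) (N : Matrix γ' γ ℝ) (Z : α → β → γ → ℝ) :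
    mode2 M (mode3 N Z) = mode3 N (mode2 M Z) := by
  funext a b c
  simp only [mode2, mode3, Finset.mul_sum]
  rw [Finset.sum_comm]
  exact Finset.sum_congr rfl fun y _ => Finset.sum_congr rfl fun x _ => by ring

lemma mode1_diagonal [DecidableEq α] (d : α → ℝ) (Z : α → β → γ → ℝ) :
    mode1 (Matrix.diagonal d) Z = fun a b c => d a * Z a b c := by
  funext a b c
  simp [mode1, Matrix.diagonal_apply, ite_mul, Finset.sum_ite_eq]

lemma mode2_diagonal [DecidableEq β] (d : β → ℝ) (Z : α → β → γ → ℝ) :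
    mode2 (Matrix.diagonal d) Z = fun a b c => d b * Z a b c := by
  funext a b c
  simp [mode2, Matrix.diagonal_apply, ite_mul, Finset.sum_ite_eq]

lemma mode3_diagonal [DecidableEq γ] (d : γ → ℝ) (Z : α → β → γ → ℝ) :
    mode3 (Matrix.diagonal d) Z = fun a b c => d c * Z a b c := by
  funext a b c
  simp [mode3, Matrix.diagonal_apply, ite_mul, Finset.sum_ite_eq]

lemma mode1_one [DecidableEq α] (Z : α → β → γ → ℝ) : mode1 (1 : Matrix α α ℝ) Z = Z := by
  rw [← Matrix.diagonal_one, mode1_diagonal]; simp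

lemma mode2_one [DecidableEq β] (Z : α → β → γ → ℝ) : mode2 (1 : Matrix β β ℝ) Z = Z := by
  rw [← Matrix.diagonal_one, mode2_diagonal]; simp

lemma mode3_one [DecidableEq γ] (Z : α → β → γ → ℝ) : mode3 (1 : Matrix γ γ ℝ) Z = Z := by
  rw [← Matrix.diagonal_one, mode3_diagonal]; simp

lemma mode1_sub (M : Matrix α' α ℝ) (X Y : α → β → γ → ℝ) :
    mode1 M (fun a b c => X a b c - Y a b c) =
      fun a b c => mode1 M X a b c - mode1 M Y a b c := by
  funext a b c; simp [mode1, mul_sub, Finset.sum_sub_distrib]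

lemma mode2_sub (M : Matrix β' β ℝ) (X Y : α → β → γ → ℝ) :
    mode2 M (fun a b c => X a b c - Y a b c) =
      fun a b c => mode2 M X a b c - mode2 M Y a b c := by
  funext a b c; simp [mode2, mul_sub, Finset.sum_sub_distrib]

lemma mode3_sub (M : Matrix γ' γ ℝ) (X Y : α → β → γ → ℝ) :
    mode3 M (fun a b c => X a b c - Y a b c) =
      fun a b c => mode3 M X a b c - mode3 M Y a b c := by
  funext a b c; simp [mode3, mul_sub, Finset.sum_sub_distrib]

lemma mode1_congr (M : Matrix α' α ℝ) {X Y : α → β → γ → ℝ} (h : ∀ a b c, X a b c = Y a b c) :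
    mode1 M X = mode1 M Y := by
  funext a b c; simp only [mode1, h]

lemma mode2_congr (M : Matrix β' β ℝ) {X Y : α → β → γ → ℝ} (h : ∀ a b c, X a b c = Y a b c) :
    mode2 M X = mode2 M Y := by
  funext a b c; simp only [mode2, h]

lemma mode3_congr (M : Matrix γ' γ ℝ) {X Y : α → β → γ → ℝ} (h : ∀ a b c, X a b c = Y a b c) :
    mode3 M X = mode3 M Y := by
  funext a b c; simp only [mode3, h]

lemma mode1_add_smul (M : Matrix α' α ℝ) (t : ℝ) (X Y : α → β → γ → ℝ) :
    mode1 M (fun a b c => X a b c + t * Y a b c) =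
      fun a b c => mode1 M X a b c + t * mode1 M Y a b c := by
  funext a b c
  simp only [mode1, mul_add, Finset.sum_add_distrib, Finset.mul_sum]
  congr 1
  exact Finset.sum_congr rfl fun x _ => by ring

lemma mode2_add_smul (M : Matrix β' β ℝ) (t : ℝ) (X Y : α → β → γ → ℝ) :
    mode2 M (fun a b c => X a b c + t * Y a b c) =
      fun a b c => mode2 M X a b c + t * mode2 M Y a b c := by
  funext a b c
  simp only [mode2, mul_add, Finset.sum_add_distrib, Finset.mul_sum]
  congr 1
  exact Finset.sum_congr rfl fun x _ => by ring

lemma mode3_add_smul (M : Matrix γ' γ ℝ) (t : ℝ) (X Y : α → β → γ → ℝ) :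
    mode3 M (fun a b c => X a b c + t * Y a b c) =
      fun a b c => mode3 M X a b c + t * mode3 M Y a b c := by
  funext a b c
  simp only [mode3, mul_add, Finset.sum_add_distrib, Finset.mul_sum]
  congr 1
  exact Finset.sum_congr rfl fun x _ => by ring

end TikAux


open TikAux

/-- the strongly convex problem
`min_S ‖H − S ×₁ Q1 ×₂ Q2 ×₃ Q3‖_F² + τ‖S − K‖_F²` has the unique solution
`S = T'' ×₁ V1 ×₂ V2 ×₃ V3`, built from the eigendecompositions `Qᵢᵀ Qᵢ = Vᵢ Σᵢ Vᵢᵀ`,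
`T = H ×₁ Q1ᵀ ×₂ Q2ᵀ ×₃ Q3ᵀ + τ K`, `T' = T ×₁ V1ᵀ ×₂ V2ᵀ ×₃ V3ᵀ`, and
`Vec(T'') = (Σ3 ⊗ Σ2 ⊗ Σ1 + τ I)⁻¹ Vec(T')`. -/
theorem tikhonov_tensor_solution {n1 n2 n3 m1 m2 m3 : ℕ}
    (H : Fin m1 → Fin m2 → Fin m3 → ℝ)
    (Q1 : Matrix (Fin m1) (Fin n1) ℝ) (Q2 : Matrix (Fin m2) (Fin n2) ℝ)
    (Q3 : Matrix (Fin m3) (Fin n3) ℝ)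
    (K : Fin n1 → Fin n2 → Fin n3 → ℝ) (τ : ℝ) (hτ : 0 < τ)
    (V1 : Matrix (Fin n1) (Fin n1) ℝ) (V2 : Matrix (Fin n2) (Fin n2) ℝ)
    (V3 : Matrix (Fin n3) (Fin n3) ℝ)
    (hV1 : V1 * V1ᵀ = 1 ∧ V1ᵀ * V1 = 1) (hV2 : V2 * V2ᵀ = 1 ∧ V2ᵀ * V2 = 1)
    (hV3 : V3 * V3ᵀ = 1 ∧ V3ᵀ * V3 = 1)
    (d1 : Fin n1 → ℝ) (d2 : Fin n2 → ℝ) (d3 : Fin n3 → ℝ)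
    (hd1 : ∀ a, 0 ≤ d1 a) (hd2 : ∀ b, 0 ≤ d2 b) (hd3 : ∀ c, 0 ≤ d3 c)
    (heig1 : Q1ᵀ * Q1 = V1 * Matrix.diagonal d1 * V1ᵀ)
    (heig2 : Q2ᵀ * Q2 = V2 * Matrix.diagonal d2 * V2ᵀ)
    (heig3 : Q3ᵀ * Q3 = V3 * Matrix.diagonal d3 * V3ᵀ)
    (T T' T'' Sopt : Fin n1 → Fin n2 → Fin n3 → ℝ)
    (hT : ∀ a b c, T a b c = mode3 Q3ᵀ (mode2 Q2ᵀ (mode1 Q1ᵀ H)) a b c + τ * K a b c)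
    (hT' : T' = mode3 V3ᵀ (mode2 V2ᵀ (mode1 V1ᵀ T)))
    (hT'' : ∀ a b c, T'' a b c = T' a b c / (d1 a * d2 b * d3 c + τ))
    (hSopt : Sopt = mode3 V3 (mode2 V2 (mode1 V1 T''))) :
    (∀ S : Fin n1 → Fin n2 → Fin n3 → ℝ,
        frobSq (fun a b c => H a b c - mode3 Q3 (mode2 Q2 (mode1 Q1 Sopt)) a b c) +
            τ * frobSq (fun a b c => Sopt a b c - K a b c) ≤
          frobSq (fun a b c => H a b c - mode3 Q3 (mode2 Q2 (mode1 Q1 S)) a b c) +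
            τ * frobSq (fun a b c => S a b c - K a b c)) ∧
    (∀ S : Fin n1 → Fin n2 → Fin n3 → ℝ,
        frobSq (fun a b c => H a b c - mode3 Q3 (mode2 Q2 (mode1 Q1 S)) a b c) +
            τ * frobSq (fun a b c => S a b c - K a b c) =
          frobSq (fun a b c => H a b c - mode3 Q3 (mode2 Q2 (mode1 Q1 Sopt)) a b c) +
            τ * frobSq (fun a b c => Sopt a b c - K a b c) →
        S = Sopt) := by
  have hadj : ∀ (X : Fin n1 → Fin n2 → Fin n3 → ℝ) (W : Fin m1 → Fin m2 → Fin m3 → ℝ),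
      ip (mode3 Q3 (mode2 Q2 (mode1 Q1 X))) W =
        ip X (mode3 Q3ᵀ (mode2 Q2ᵀ (mode1 Q1ᵀ W))) := by
    intro X W
    rw [ip_mode3, ip_mode2, ip_mode1, mode1_mode2, mode1_mode3, mode2_mode3]
  have e1 : Q1ᵀ * Q1 * V1 = V1 * Matrix.diagonal d1 := by
    rw [heig1, Matrix.mul_assoc, hV1.2, Matrix.mul_one]
  have e2 : Q2ᵀ * Q2 * V2 = V2 * Matrix.diagonal d2 := by
    rw [heig2, Matrix.mul_assoc, hV2.2, Matrix.mul_one]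
  have e3 : Q3ᵀ * Q3 * V3 = V3 * Matrix.diagonal d3 := by
    rw [heig3, Matrix.mul_assoc, hV3.2, Matrix.mul_one]
  have hATA : mode3 Q3ᵀ (mode2 Q2ᵀ (mode1 Q1ᵀ (mode3 Q3 (mode2 Q2 (mode1 Q1 Sopt))))) =
      mode3 V3 (mode2 V2 (mode1 V1 (fun a b c => d1 a * d2 b * d3 c * T'' a b c))) := by
    rw [mode1_mode3, mode1_mode2, mode1_mode1, mode2_mode3, mode2_mode2, mode3_mode3, hSopt,
        mode1_mode3, mode1_mode2, mode1_mode1, mode2_mode3, mode2_mode2, mode3_mode3,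
        e1, e2, e3,
        ← mode1_mode1, mode1_diagonal, ← mode2_mode2, ← mode1_mode2, mode2_diagonal,
        ← mode3_mode3, ← mode2_mode3, ← mode1_mode3, mode3_diagonal]
    apply congrArg (mode3 V3)
    apply congrArg (mode2 V2)
    apply congrArg (mode1 V1)
    funext a b c
    ring
  have hVT : mode3 V3 (mode2 V2 (mode1 V1 T')) = T := by
    rw [hT', mode1_mode3, mode1_mode2, mode1_mode1, hV1.1, mode1_one,
        mode2_mode3, mode2_mode2, hV2.1, mode2_one, mode3_mode3, hV3.1, mode3_one]
  have hD : (fun a b c => d1 a * d2 b * d3 c * T'' a b c + τ * T'' a b c) = T' := by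
    funext a b c
    have h0 : 0 ≤ d1 a * d2 b * d3 c := mul_nonneg (mul_nonneg (hd1 a) (hd2 b)) (hd3 c)
    have hne : d1 a * d2 b * d3 c + τ ≠ 0 := by positivity
    rw [hT'']
    field_simp
  have hmerge : mode3 V3 (mode2 V2 (mode1 V1 (fun a b c =>
      d1 a * d2 b * d3 c * T'' a b c + τ * T'' a b c))) =
      fun a b c =>
        mode3 V3 (mode2 V2 (mode1 V1 (fun a b c => d1 a * d2 b * d3 c * T'' a b c))) a b c +
          τ * mode3 V3 (mode2 V2 (mode1 V1 T'')) a b c := by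
    rw [mode1_add_smul, mode2_add_smul, mode3_add_smul]
  have hNEf : (fun a b c =>
      mode3 Q3ᵀ (mode2 Q2ᵀ (mode1 Q1ᵀ (mode3 Q3 (mode2 Q2 (mode1 Q1 Sopt))))) a b c +
        τ * Sopt a b c) = T := by
    rw [hATA, hSopt, ← hVT, ← hD, hmerge]
  have hTf : T = fun a b c => mode3 Q3ᵀ (mode2 Q2ᵀ (mode1 Q1ᵀ H)) a b c + τ * K a b c :=
    funext fun a => funext fun b => funext fun c => hT a b c
  have G : ∀ X : Fin n1 → Fin n2 → Fin n3 → ℝ,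
      ip X (mode3 Q3ᵀ (mode2 Q2ᵀ (mode1 Q1ᵀ (mode3 Q3 (mode2 Q2 (mode1 Q1 Sopt)))))) +
          τ * ip X Sopt =
        ip X (mode3 Q3ᵀ (mode2 Q2ᵀ (mode1 Q1ᵀ H))) + τ * ip X K := by
    intro X
    have h1 : ip X T =
        ip X (mode3 Q3ᵀ (mode2 Q2ᵀ (mode1 Q1ᵀ (mode3 Q3 (mode2 Q2 (mode1 Q1 Sopt)))))) +
          τ * ip X Sopt := by
      rw [← hNEf, ip_add_right, ip_smul_right]
    have h2 : ip X T = ip X (mode3 Q3ᵀ (mode2 Q2ᵀ (mode1 Q1ᵀ H))) + τ * ip X K := by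
      conv_lhs => rw [hTf]
      rw [ip_add_right, ip_smul_right]
    linarith
  have key : ∀ S : Fin n1 → Fin n2 → Fin n3 → ℝ,
      frobSq (fun a b c => H a b c - mode3 Q3 (mode2 Q2 (mode1 Q1 S)) a b c) +
          τ * frobSq (fun a b c => S a b c - K a b c) =
        (frobSq (fun a b c => H a b c - mode3 Q3 (mode2 Q2 (mode1 Q1 Sopt)) a b c) +
          τ * frobSq (fun a b c => Sopt a b c - K a b c)) +
        ip (fun a b c => mode3 Q3 (mode2 Q2 (mode1 Q1 S)) a b c -
              mode3 Q3 (mode2 Q2 (mode1 Q1 Sopt)) a b c)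
           (fun a b c => mode3 Q3 (mode2 Q2 (mode1 Q1 S)) a b c -
              mode3 Q3 (mode2 Q2 (mode1 Q1 Sopt)) a b c) +
        τ * ip (fun a b c => S a b c - Sopt a b c) (fun a b c => S a b c - Sopt a b c) := by
    intro S
    have A1 := hadj S H
    have A2 := hadj Sopt H
    have A3 := hadj S (mode3 Q3 (mode2 Q2 (mode1 Q1 Sopt)))
    have A4 := hadj Sopt (mode3 Q3 (mode2 Q2 (mode1 Q1 Sopt)))
    have G1 := G S
    have G2 := G Sopt
    have C1 : ip H (mode3 Q3 (mode2 Q2 (mode1 Q1 S))) =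
        ip (mode3 Q3 (mode2 Q2 (mode1 Q1 S))) H := ip_comm _ _
    have C2 : ip H (mode3 Q3 (mode2 Q2 (mode1 Q1 Sopt))) =
        ip (mode3 Q3 (mode2 Q2 (mode1 Q1 Sopt))) H := ip_comm _ _
    have C3 : τ * ip K S = τ * ip S K := by rw [ip_comm]
    have C4 : τ * ip K Sopt = τ * ip Sopt K := by rw [ip_comm]
    have C5 : τ * ip Sopt S = τ * ip S Sopt := by rw [ip_comm]
    have C6 : ip (mode3 Q3 (mode2 Q2 (mode1 Q1 Sopt))) (mode3 Q3 (mode2 Q2 (mode1 Q1 S))) =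
        ip (mode3 Q3 (mode2 Q2 (mode1 Q1 S))) (mode3 Q3 (mode2 Q2 (mode1 Q1 Sopt))) :=
      ip_comm _ _
    rw [frobSq_eq_ip, frobSq_eq_ip, frobSq_eq_ip, frobSq_eq_ip,
        ip_sub_sub, ip_sub_sub, ip_sub_sub, ip_sub_sub, ip_sub_sub, ip_sub_sub]
    linarith
  constructor
  · intro S
    have k := key S
    have p1 := ip_nonneg (fun a b c => mode3 Q3 (mode2 Q2 (mode1 Q1 S)) a b c -
      mode3 Q3 (mode2 Q2 (mode1 Q1 Sopt)) a b c)
    have p2 := ip_nonneg (fun a b c => S a b c - Sopt a b c)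
    nlinarith [mul_nonneg hτ.le p2]
  · intro S hS
    have k := key S
    have p1 := ip_nonneg (fun a b c => mode3 Q3 (mode2 Q2 (mode1 Q1 S)) a b c -
      mode3 Q3 (mode2 Q2 (mode1 Q1 Sopt)) a b c)
    have p2 := ip_nonneg (fun a b c => S a b c - Sopt a b c)
    have hz : ip (fun a b c => S a b c - Sopt a b c)
        (fun a b c => S a b c - Sopt a b c) = 0 := by
      by_contra hc
      have hgt : 0 < ip (fun a b c => S a b c - Sopt a b c)
          (fun a b c => S a b c - Sopt a b c) := lt_of_le_of_ne p2 (Ne.symm hc)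
      nlinarith [mul_pos hτ hgt]
    funext a b c
    have h := ip_self_eq_zero hz a b c
    linarith
end
end
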